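/- Let B be a nondegenerate alternating bilinear form on a finite-dimensional complex vector space V and let P be nilpotent and self-adjoint with respect to B. For a subspace U ⊆ V the following are equivalent: (1) g(U) = U for every automorphism g of (V, B, P); (2) U is a finite sum of subspaces of the form ker P^k ∩ im P^l with k, l ≥ 0. -/

import Mathlib

/-!
An automorphism commutes with `P`, so it preserves every `ker P^k ⊓ im P^l`.

Conversely, for `P^(m+1) a = 0` the map `S x = ∑_{i+j=m} B (P^i a) x • P^j a` is skew-adjoint,
commutes with `P` and squares to zero, so `1 + S` is an automorphism and an invariant `U` is
stable under every such `S`. Let `u ∈ U ⊓ im P^D` with `u ∉ im P^(D+1)`, and let `r` be least with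
`P^(r+1) u ∈ im P^(r+2+D)`. Then `P^r u ∉ im P^(r+1+D) = (ker P^(r+1+D))^⊥`, and applying the maps
`S` to `u` puts the whole piece `ker P^(r+1) ⊓ im P^D` into `U`. Subtracting from `u` an element of
this piece leaves an element of `U ⊓ im P^(D+1)`, so a descending induction on `D` writes every
element of `U` as a sum of elements of pieces contained in `U`.
-/

open Module

/-- An automorphism of `(V, B, P)`: a linear automorphism preserving `B` and
commuting with `P`. -/
def IsAut {V : Type*} [AddCommGroup V] [Module ℂ V]
    (B : V →ₗ[ℂ] V →ₗ[ℂ] ℂ) (P : V →ₗ[ℂ] V) (g : V ≃ₗ[ℂ] V) : Prop :=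
  (∀ u v, B (g u) (g v) = B u v) ∧ ∀ v, g (P v) = P (g v)

theorem Module.End.pow_apply_pow_apply {R M : Type*} [Semiring R] [AddCommMonoid M]
    [Module R M] (f : Module.End R M) (i j : ℕ) (x : M) :
    (f ^ i) ((f ^ j) x) = (f ^ (i + j)) x := by
  rw [pow_add, Module.End.mul_apply]

section ChainTransvection

open Finset

variable {R V : Type*} [CommRing R] [AddCommGroup V] [Module R V]
  {B : V →ₗ[R] V →ₗ[R] R} {P : Module.End R V}

theorem LinearMap.IsSelfAdjoint.pow (hP : B.IsSelfAdjoint P) (r : ℕ) :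
    B.IsSelfAdjoint ⇑(P ^ r) := by
  induction r with
  | zero => exact LinearMap.isAdjointPair_one
  | succ r ih =>
    have h : LinearMap.IsAdjointPair B B ⇑(P ^ r * P) ⇑(P * P ^ r) := ih.mul hP
    rwa [← pow_succ, ← pow_succ'] at h

theorem LinearMap.IsAlt.apply_pow_apply_pow_eq_zero [IsAddTorsionFree R] (hB : B.IsAlt)
    (hP : B.IsSelfAdjoint P) (a : V) (i j : ℕ) : B ((P ^ i) a) ((P ^ j) a) = 0 := by
  have hij : B ((P ^ i) a) ((P ^ j) a) = B a ((P ^ (i + j)) a) := by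
    rw [hP.pow i, Module.End.pow_apply_pow_apply]
  have hji : B ((P ^ j) a) ((P ^ i) a) = B a ((P ^ (i + j)) a) := by
    rw [hP.pow j, Module.End.pow_apply_pow_apply, add_comm]
  exact self_eq_neg.mp ((hij.trans hji.symm).trans (hB.neg _ _).symm)

variable (B P) in
/-- For `P^(m+1) a = 0` this is a square-zero element of the symplectic Lie algebra of `B`
commuting with `P`; `1 +` it is an automorphism of `(V, B, P)` generalizing a symplectic
transvection. -/
noncomputable def chainTransvection (a : V) (m : ℕ) : Module.End R V :=
  ∑ p ∈ antidiagonal m, (B ((P ^ p.1) a)).smulRight ((P ^ p.2) a)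

theorem chainTransvection_apply (a : V) (m : ℕ) (x : V) :
    chainTransvection B P a m x = ∑ p ∈ antidiagonal m, B ((P ^ p.1) a) x • (P ^ p.2) a := by
  simp [chainTransvection]

theorem chainTransvection_mul_self [IsAddTorsionFree R] (hB : B.IsAlt) (hP : B.IsSelfAdjoint P)
    (a : V) (m : ℕ) : chainTransvection B P a m * chainTransvection B P a m = 0 := by
  ext x
  simp [chainTransvection_apply, hB.apply_pow_apply_pow_eq_zero hP]

theorem chainTransvection_isSkewAdjoint (hB : B.IsAlt) (a : V) (m : ℕ) :
    B.IsSkewAdjoint (chainTransvection B P a m) := by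
  intro x y
  simp only [chainTransvection_apply, map_sum, map_smul, LinearMap.sum_apply, smul_eq_mul,
    Pi.neg_apply, map_neg, ← Finset.sum_neg_distrib]
  rw [← Finset.Nat.sum_antidiagonal_swap]
  refine Finset.sum_congr rfl fun p _ => ?_
  rw [Prod.fst_swap, Prod.snd_swap, ← hB.neg x, LinearMap.smul_apply, smul_eq_mul, neg_mul,
    mul_comm]

theorem chainTransvection_commute (hP : B.IsSelfAdjoint P) {a : V} {m : ℕ}
    (ha : (P ^ (m + 1)) a = 0) : Commute (chainTransvection B P a m) P := by
  ext x
  let F : ℕ × ℕ → V := fun p => B ((P ^ p.1) a) x • (P ^ p.2) a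
  -- split off the two boundary terms of `∑_{i+j=m+1} F (i, j)`; both vanish because of `ha`
  have h := (Finset.Nat.sum_antidiagonal_succ (n := m) (f := F)).symm.trans
    Finset.Nat.sum_antidiagonal_succ'
  simp only [F, ha, smul_zero, zero_add, map_zero, LinearMap.zero_apply, zero_smul] at h
  simp only [Module.End.mul_apply, chainTransvection_apply, map_sum, map_smul]
  convert h using 3 with p
  · rw [← hP, ← Module.End.mul_apply, ← pow_succ']
  · rw [← Module.End.mul_apply, ← pow_succ']

variable (B P) in
def ChainTransvectionStable (U : Submodule R V) : Prop :=
  ∀ (a : V) (m : ℕ), (P ^ (m + 1)) a = 0 → ∀ u ∈ U, chainTransvection B P a m u ∈ U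

end ChainTransvection

noncomputable def Module.End.oneAddEquiv {R M : Type*} [Ring R] [AddCommGroup M] [Module R M]
    (S : Module.End R M) (hS : S * S = 0) : M ≃ₗ[R] M :=
  LinearMap.GeneralLinearGroup.generalLinearEquiv R M
    ⟨1 + S, 1 - S, by rw [add_mul, one_mul, mul_sub, mul_one, hS, sub_zero, sub_add_cancel],
      by rw [sub_mul, one_mul, mul_add, mul_one, hS, add_zero, add_sub_cancel_right]⟩

theorem Module.End.oneAddEquiv_apply {R M : Type*} [Ring R] [AddCommGroup M] [Module R M]
    (S : Module.End R M) (hS : S * S = 0) (x : M) : S.oneAddEquiv hS x = x + S x :=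
  rfl

theorem LinearMap.IsSkewAdjoint.apply_add_apply_add_of_mul_self_eq_zero {R M : Type*} [CommRing R]
    [AddCommGroup M] [Module R M] {B : M →ₗ[R] M →ₗ[R] R} {S : Module.End R M}
    (hS : B.IsSkewAdjoint S) (hS2 : S * S = 0) (x y : M) :
    B (x + S x) (y + S y) = B x y := by
  have hSS : B (S x) (S y) = 0 := by
    rw [hS, Pi.neg_apply, ← Module.End.mul_apply, hS2, LinearMap.zero_apply, map_neg, map_zero,
      neg_zero]
  simp only [map_add, LinearMap.add_apply, hSS, hS x y, Pi.neg_apply, map_neg]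
  abel

theorem chainTransvectionStable_of_isAut {V : Type*} [AddCommGroup V] [Module ℂ V]
    {B : V →ₗ[ℂ] V →ₗ[ℂ] ℂ} {P : Module.End ℂ V} (hB : B.IsAlt) (hP : B.IsSelfAdjoint P)
    {U : Submodule ℂ V} (hU : ∀ g : V ≃ₗ[ℂ] V, IsAut B P g → Submodule.map g.toLinearMap U = U) :
    ChainTransvectionStable B P U := by
  intro a m ha u hu
  set S := chainTransvection B P a m
  have hS2 : S * S = 0 := chainTransvection_mul_self hB hP a m
  have hSP : Commute S P := chainTransvection_commute hP ha
  have hg : IsAut B P (S.oneAddEquiv hS2) :=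
    ⟨(chainTransvection_isSkewAdjoint hB a m).apply_add_apply_add_of_mul_self_eq_zero hS2,
      fun v => by simp only [Module.End.oneAddEquiv_apply, map_add, ← Module.End.mul_apply, hSP.eq]⟩
  have hgu : u + S u ∈ U := by
    rw [← hU _ hg]
    exact ⟨u, hu, rfl⟩
  simpa using sub_mem hgu hu

theorem LinearMap.IsSelfAdjoint.orthogonal_ker_eq_range {K V : Type*} [Field K] [AddCommGroup V]
    [Module K V] [FiniteDimensional K V] {B : V →ₗ[K] V →ₗ[K] K} (hB : B.Nondegenerate)
    {f : Module.End K V} (hf : B.IsSelfAdjoint f) :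
    LinearMap.BilinForm.orthogonal B (LinearMap.ker f) = LinearMap.range f := by
  symm
  apply Submodule.eq_of_le_of_finrank_eq
  · rintro _ ⟨z, rfl⟩
    rw [LinearMap.BilinForm.mem_orthogonal_iff]
    intro n hn
    rw [← hf, LinearMap.mem_ker.mp hn, map_zero, LinearMap.zero_apply]
  · rw [LinearMap.BilinForm.finrank_orthogonal hB, ← LinearMap.finrank_range_add_finrank_ker f]
    omega

theorem Submodule.le_of_forall_apply_ne_zero {R M N : Type*} [Ring R] [AddCommGroup M]
    [Module R M] [AddCommGroup N] [Module R N] {W U : Submodule R M} (f : M →ₗ[R] N) {y : M}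
    (hyW : y ∈ W) (hy : f y ≠ 0) (h : ∀ b ∈ W, f b ≠ 0 → b ∈ U) : W ≤ U := by
  intro b hb
  by_cases hfb : f b = 0
  · have hby : b + y ∈ U := h _ (add_mem hb hyW) (by rwa [map_add, hfb, zero_add])
    simpa using sub_mem hby (h y hyW hy)
  · exact h b hb hfb

theorem exists_ker_pow_inf_range_pow_sub_mem_range {R M : Type*} [Ring R] [AddCommGroup M]
    [Module R M] {P : Module.End R M} {n D : ℕ} (hn : P ^ n = 0) {u : M}
    (hu : u ∈ LinearMap.range (P ^ D)) (hu' : u ∉ LinearMap.range (P ^ (D + 1))) :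
    ∃ r, r + 1 ≤ n ∧ (P ^ r) u ∉ LinearMap.range (P ^ (r + 1 + D)) ∧
      ∃ v ∈ LinearMap.ker (P ^ (r + 1)) ⊓ LinearMap.range (P ^ D),
        u - v ∈ LinearMap.range (P ^ (D + 1)) := by
  classical
  have hnu : (P ^ n) u ∈ LinearMap.range (P ^ (n + 1 + D)) := by simp [hn]
  have hex : ∃ s, (P ^ s) u ∈ LinearMap.range (P ^ (s + 1 + D)) := ⟨n, hnu⟩
  obtain ⟨r, hr⟩ : ∃ r, Nat.find hex = r + 1 := by
    refine Nat.exists_eq_add_one_of_ne_zero fun h => hu' ?_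
    have hspec := Nat.find_spec hex
    rwa [h, pow_zero, Module.End.one_apply, zero_add, add_comm] at hspec
  have hrn : r + 1 ≤ n := hr ▸ Nat.find_le hnu
  have hmin : (P ^ r) u ∉ LinearMap.range (P ^ (r + 1 + D)) := Nat.find_min hex (by omega)
  obtain ⟨z, hz⟩ : (P ^ (r + 1)) u ∈ LinearMap.range (P ^ (r + 1 + 1 + D)) :=
    hr ▸ Nat.find_spec hex
  obtain ⟨w, rfl⟩ := hu
  refine ⟨r, hrn, hmin, (P ^ D) w - (P ^ (D + 1)) z, Submodule.mem_inf.mpr ⟨?_, ?_⟩, ?_⟩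
  · rw [LinearMap.mem_ker, map_sub, ← hz, Module.End.pow_apply_pow_apply,
      show r + 1 + (D + 1) = r + 1 + 1 + D by omega, sub_self]
  · exact ⟨w - P z, by rw [map_sub, pow_succ, Module.End.mul_apply]⟩
  · exact ⟨z, (sub_sub_cancel _ _).symm⟩

theorem Finset.exists_fin_iSup_eq {α ι : Type*} [CompleteLattice α] (s : Finset ι) (f : ι → α) :
    ∃ (M : ℕ) (e : Fin M → ι), ⨆ i ∈ s, f i = ⨆ j, f (e j) :=
  ⟨s.card, fun j => s.equivFin.symm j, by
    rw [s.equivFin.symm.iSup_comp (g := fun i : s => f i), iSup_subtype]⟩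

namespace ChainTransvectionStable

variable {K V : Type*} [Field K] [AddCommGroup V] [Module K V]
  {B : V →ₗ[K] V →ₗ[K] K} {P : Module.End K V} {U : Submodule K V}

open Finset Module.End in
theorem pow_add_apply_mem (hU : ChainTransvectionStable B P U) (hP : B.IsSelfAdjoint P)
    {u w b : V} {r t D : ℕ} (hu : u ∈ U) (hw : (P ^ D) w = u) (ht : t ≤ r)
    (hb : (P ^ (r + 1 + D)) b = 0)
    (hnext : ∀ b', (P ^ (r + 1 + D)) b' = 0 → (P ^ (D + t + 1)) b' ∈ U)
    (hbu : B b ((P ^ r) u) ≠ 0) : (P ^ (D + t)) b ∈ U := by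
  classical
  set m := r + D - t
  have ha : (P ^ (m + 1)) ((P ^ t) b) = 0 := by
    rw [pow_apply_pow_apply, show m + 1 + t = r + 1 + D by omega, hb]
  have hp₀ : (r - t, D) ∈ antidiagonal m := by
    rw [HasAntidiagonal.mem_antidiagonal]; omega
  have hS := hU _ m ha u hu
  rw [chainTransvection_apply, ← add_sum_erase _ _ hp₀] at hS
  have hlead : B ((P ^ (r - t)) ((P ^ t) b)) u • (P ^ D) ((P ^ t) b)
      = B b ((P ^ r) u) • (P ^ (D + t)) b := by
    rw [pow_apply_pow_apply, pow_apply_pow_apply, hP.pow, Nat.sub_add_cancel ht]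
  -- terms with `i + t < r` lie in `U` by `hnext`; those with `i + t > r` vanish as `u ∈ im P^D`
  have hrest : ∑ p ∈ (antidiagonal m).erase (r - t, D),
      B ((P ^ p.1) ((P ^ t) b)) u • (P ^ p.2) ((P ^ t) b) ∈ U := by
    refine Submodule.sum_mem _ fun p hp => ?_
    obtain ⟨hne, hpm⟩ := mem_erase.mp hp
    rw [HasAntidiagonal.mem_antidiagonal] at hpm
    rcases lt_or_ge (p.1 + t) r with hlt | hge
    · refine U.smul_mem _ ?_
      have hvec : (P ^ p.2) ((P ^ t) b) = (P ^ (D + t + 1)) ((P ^ (p.2 - D - 1)) b) := by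
        rw [pow_apply_pow_apply, pow_apply_pow_apply]
        congr 2
        omega
      rw [hvec]
      refine hnext _ ?_
      rw [pow_apply_pow_apply]
      exact pow_map_zero_of_le (by omega) hb
    · have hcoef : B ((P ^ p.1) ((P ^ t) b)) u = 0 := by
        have hne' : p.1 ≠ r - t := fun h => hne (Prod.ext h (by simp; omega))
        rw [← hw, ← hP.pow, pow_apply_pow_apply, pow_apply_pow_apply,
          pow_map_zero_of_le (by omega) hb, map_zero, LinearMap.zero_apply]
      rw [hcoef, zero_smul]
      exact U.zero_mem
  rw [hlead] at hS
  have hsmul := U.smul_mem (B b ((P ^ r) u))⁻¹ ((U.add_mem_iff_left hrest).mp hS)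
  rwa [smul_smul, inv_mul_cancel₀ hbu, one_smul] at hsmul

variable [FiniteDimensional K V]

theorem ker_pow_inf_range_pow_le (hU : ChainTransvectionStable B P U) (hB : B.Nondegenerate)
    (hP : B.IsSelfAdjoint P) {u w : V} {r D : ℕ} (hu : u ∈ U) (hw : (P ^ D) w = u)
    (hr : (P ^ r) u ∉ LinearMap.range (P ^ (r + 1 + D))) :
    LinearMap.ker (P ^ (r + 1)) ⊓ LinearMap.range (P ^ D) ≤ U := by
  obtain ⟨y, hy, hyu⟩ : ∃ y ∈ LinearMap.ker (P ^ (r + 1 + D)), B y ((P ^ r) u) ≠ 0 := by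
    rw [← (hP.pow _).orthogonal_ker_eq_range hB, LinearMap.BilinForm.mem_orthogonal_iff] at hr
    push Not at hr
    exact hr
  have hdesc : ∀ t ≤ r + 1, LinearMap.ker (P ^ (r + 1 + D)) ≤ U.comap (P ^ (D + t)) := by
    intro t ht
    induction ht using Nat.decreasingInduction with
    | self =>
      intro b hb
      simp [Module.End.pow_map_zero_of_le (by omega : r + 1 + D ≤ D + (r + 1)) hb]
    | of_succ t ht ih =>
      exact Submodule.le_of_forall_apply_ne_zero (B.flip ((P ^ r) u)) hy hyu fun b hb hbu =>
        hU.pow_add_apply_mem hP hu hw (by omega) hb (fun b' hb' => ih hb') hbu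
  rintro _ ⟨hv, b, rfl⟩
  simpa using hdesc 0 (by omega) (show (P ^ (r + 1 + D)) b = 0 by
    rw [← Module.End.pow_apply_pow_apply]; exact hv)

theorem le_of_forall_ker_pow_inf_range_pow_le (hU : ChainTransvectionStable B P U)
    (hB : B.Nondegenerate) (hP : B.IsSelfAdjoint P) {n : ℕ} (hn : P ^ n = 0) {T : Submodule K V}
    (hT : ∀ k ≤ n, ∀ l ≤ n, LinearMap.ker (P ^ k) ⊓ LinearMap.range (P ^ l) ≤ U →
      LinearMap.ker (P ^ k) ⊓ LinearMap.range (P ^ l) ≤ T) :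
    U ≤ T := by
  suffices h : ∀ D ≤ n, U ⊓ LinearMap.range (P ^ D) ≤ T by
    simpa [Module.End.one_eq_id] using h 0 n.zero_le
  intro D hD
  induction hD using Nat.decreasingInduction with
  | self => simp [hn]
  | of_succ D hD ih =>
    rintro u ⟨huU, hu⟩
    by_cases hu' : u ∈ LinearMap.range (P ^ (D + 1))
    · exact ih ⟨huU, hu'⟩
    obtain ⟨r, hrn, hr, v, hv, huv⟩ := exists_ker_pow_inf_range_pow_sub_mem_range hn hu hu'
    obtain ⟨w, hw⟩ := hu
    have hpiece := hU.ker_pow_inf_range_pow_le hB hP huU hw hr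
    have hvT := hT _ hrn _ hD.le hpiece hv
    simpa using add_mem hvT (ih ⟨sub_mem huU (hpiece hv), huv⟩)

theorem exists_eq_iSup_ker_pow_inf_range_pow (hU : ChainTransvectionStable B P U)
    (hB : B.Nondegenerate) (hP : B.IsSelfAdjoint P) (hPnil : IsNilpotent P) :
    ∃ (M : ℕ) (k l : Fin M → ℕ),
      U = ⨆ i : Fin M, (LinearMap.ker (P ^ k i) ⊓ LinearMap.range (P ^ l i)) := by
  classical
  obtain ⟨n, hn⟩ := hPnil
  let piece : ℕ × ℕ → Submodule K V := fun p =>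
    LinearMap.ker (P ^ p.1) ⊓ LinearMap.range (P ^ p.2)
  let S := (Finset.range (n + 1) ×ˢ Finset.range (n + 1)).filter (piece · ≤ U)
  obtain ⟨M, e, he⟩ := S.exists_fin_iSup_eq piece
  refine ⟨M, fun j => (e j).1, fun j => (e j).2, ?_⟩
  change U = ⨆ j, piece (e j)
  rw [← he]
  refine le_antisymm ?_ (iSup₂_le fun p hp => (Finset.mem_filter.mp hp).2)
  refine hU.le_of_forall_ker_pow_inf_range_pow_le hB hP hn fun k hk l hl hkl => ?_
  have hkl' : (k, l) ∈ S := by simp [S, piece, hkl]; omega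
  exact le_iSup₂ (f := fun p (_ : p ∈ S) => piece p) (k, l) hkl'

end ChainTransvectionStable

theorem LinearEquiv.map_ker_of_commute {R M : Type*} [Semiring R] [AddCommMonoid M] [Module R M]
    (g : M ≃ₗ[R] M) {f : Module.End R M} (h : Commute (g : Module.End R M) f) :
    (LinearMap.ker f).map (g : Module.End R M) = LinearMap.ker f := by
  have hcomap : (LinearMap.ker f).comap (g : Module.End R M) = LinearMap.ker f := by
    rw [← LinearMap.ker_comp, ← Module.End.mul_eq_comp, ← h.eq, Module.End.mul_eq_comp,
      LinearEquiv.ker_comp]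
  calc (LinearMap.ker f).map (g : Module.End R M)
      = ((LinearMap.ker f).comap (g : Module.End R M)).map (g : Module.End R M) := by rw [hcomap]
    _ = LinearMap.ker f := Submodule.map_comap_eq_of_surjective g.surjective _

theorem LinearEquiv.map_range_of_commute {R M : Type*} [Semiring R] [AddCommMonoid M]
    [Module R M] (g : M ≃ₗ[R] M) {f : Module.End R M} (h : Commute (g : Module.End R M) f) :
    (LinearMap.range f).map (g : Module.End R M) = LinearMap.range f := by
  rw [← LinearMap.range_comp, ← Module.End.mul_eq_comp, h.eq, Module.End.mul_eq_comp,
    LinearMap.range_comp_of_range_eq_top _ g.range]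

/-- **Characterization of automorphism-invariant subspaces.**
Let `B` be a nondegenerate alternating form on a finite-dimensional complex vector
space `V` and `P` nilpotent, self-adjoint with respect to `B`.  A subspace `U` is
invariant under every automorphism of `(V, B, P)` iff it is a finite sum of subspaces
of the form `ker P^k ⊓ im P^l`. -/
theorem invariant_subspaces_characterization
    {V : Type*} [AddCommGroup V] [Module ℂ V] [FiniteDimensional ℂ V]
    (B : V →ₗ[ℂ] V →ₗ[ℂ] ℂ)
    (hBalt : ∀ v, B v v = 0)
    (hBnd : ∀ v, (∀ u, B v u = 0) → v = 0)
    (P : V →ₗ[ℂ] V)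
    (hPsa : ∀ u v, B (P u) v = B u (P v))
    (hPnil : IsNilpotent P)
    (U : Submodule ℂ V) :
    (∀ g : V ≃ₗ[ℂ] V, IsAut B P g → Submodule.map g.toLinearMap U = U) ↔
    ∃ (M : ℕ) (k l : Fin M → ℕ),
      U = ⨆ i : Fin M, (LinearMap.ker (P ^ k i) ⊓ LinearMap.range (P ^ l i)) := by
  constructor
  · intro hU
    have hB : B.Nondegenerate :=
      (LinearMap.IsAlt.isRefl hBalt).nondegenerate_iff_separatingLeft.mpr hBnd
    exact (chainTransvectionStable_of_isAut hBalt hPsa hU).exists_eq_iSup_ker_pow_inf_range_pow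
      hB hPsa hPnil
  · rintro ⟨M, k, l, rfl⟩ g hg
    have hgP : Commute (g : Module.End ℂ V) P := LinearMap.ext hg.2
    rw [Submodule.map_iSup]
    refine iSup_congr fun i => ?_
    rw [Submodule.map_inf _ g.injective, g.map_ker_of_commute (hgP.pow_right _),
      g.map_range_of_commute (hgP.pow_right _)]
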